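/- Equip the set S with the topology generated by the family consisting of all singletons {(n,m)} for n, m ∈ ℕ, all sets D(n₀,m₀) for n₀, m₀ ∈ ℕ, and all sets E(m₀,f) for m₀ ∈ ℕ and all COMPUTABLE functions f : ℕ → ℕ. Then the point (∞,∞) belongs to the closure of the subset ℕ² ⊆ S of points with both coordinates finite, but for every computable sequence s : ℕ → ℕ × ℕ, the corresponding sequence of points of ℕ² ⊆ S does not converge to (∞,∞) in this topology. -/

import Mathlib

namespace ArensLike

/-- The underlying set: pairs `(n, m)` with `n, m ∈ ℕ ∪ {∞}` (where `∞` is `none`),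
restricted so that the first coordinate can be `∞` while the second is finite,
together with the point `(∞, ∞)`. -/
abbrev S : Type := {p : Option ℕ × Option ℕ // p.2 = none → p.1 = none}

/-- The singleton basic set `{(n, m)}` for finite `n, m`. -/
def Sing (n m : ℕ) : Set S :=
  {p : S | (p : Option ℕ × Option ℕ) = (some n, some m)}

/-- `D(n₀, m₀) = {(n, m₀) | n ≥ n₀} ∪ {(∞, m₀)}`. -/
def D (n₀ m₀ : ℕ) : Set S :=
  {p : S | ∃ n : ℕ, n₀ ≤ n ∧ (p : Option ℕ × Option ℕ) = (some n, some m₀)} ∪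
    {p : S | (p : Option ℕ × Option ℕ) = ((none : Option ℕ), some m₀)}

/-- `E(m₀, f) = {(∞, ∞)} ∪ ⋃_{m ≥ m₀} D(f m, m)`. -/
def E (m₀ : ℕ) (f : ℕ → ℕ) : Set S :=
  {p : S | (p : Option ℕ × Option ℕ) = ((none : Option ℕ), (none : Option ℕ))} ∪
    ⋃ m : ℕ, ⋃ (_ : m₀ ≤ m), D (f m) m

/-- The generating family of subsets, for a given class `F` of functions allowed
in the sets `E(m₀, f)`. -/
def gen (F : Set (ℕ → ℕ)) : Set (Set S) :=
  {s : Set S | (∃ n m : ℕ, s = Sing n m) ∨ (∃ n₀ m₀ : ℕ, s = D n₀ m₀) ∨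
    (∃ m₀ : ℕ, ∃ f : ℕ → ℕ, f ∈ F ∧ s = E m₀ f)}

/-- The topology on `S` generated by the family `gen F`. -/
def topo (F : Set (ℕ → ℕ)) : TopologicalSpace S :=
  TopologicalSpace.generateFrom (gen F)

/-- The point `(∞, ∞)`. -/
def infPt : S := ⟨((none : Option ℕ), (none : Option ℕ)), fun _ => rfl⟩

/-- The subset `ℕ² ⊆ S` of points with both coordinates finite. -/
def finitePts : Set S :=
  {p : S | ∃ n m : ℕ, (p : Option ℕ × Option ℕ) = (some n, some m)}

/-- The inclusion of `ℕ²` into `S`. -/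
def emb (q : ℕ × ℕ) : S :=
  ⟨(some q.1, some q.2), fun h => absurd h (by simp)⟩

open TopologicalSpace Filter

lemma emb_mem_E {m₀ : ℕ} {f : ℕ → ℕ} {q : ℕ × ℕ} :
    emb q ∈ E m₀ f ↔ m₀ ≤ q.2 ∧ f q.2 ≤ q.1 := by
  constructor
  · rintro (h | h)
    · simp [emb] at h
    · rcases Set.mem_iUnion.1 h with ⟨m, hm⟩
      rcases Set.mem_iUnion.1 hm with ⟨hm₀, hD⟩
      rcases hD with ⟨n, hn, hq⟩ | hq
      · simp only [emb, Prod.mk.injEq, Option.some.injEq] at hq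
        obtain ⟨h1, h2⟩ := hq
        subst h1; subst h2
        exact ⟨hm₀, hn⟩
      · simp [emb] at hq
  · rintro ⟨h1, h2⟩
    refine Or.inr (Set.mem_iUnion.2 ⟨q.2, Set.mem_iUnion.2 ⟨h1, Or.inl ⟨q.1, h2, rfl⟩⟩⟩)

lemma infPt_mem_E {m₀ : ℕ} {f : ℕ → ℕ} : infPt ∈ E m₀ f := Or.inl rfl

lemma E_anti {m₀ m₁ : ℕ} {f g : ℕ → ℕ} (hm : m₀ ≤ m₁) (hfg : ∀ m, f m ≤ g m) :
    E m₁ g ⊆ E m₀ f := by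
  rintro p (h | h)
  · exact Or.inl h
  · rcases Set.mem_iUnion.1 h with ⟨m, hm'⟩
    rcases Set.mem_iUnion.1 hm' with ⟨hm₁, hD⟩
    refine Or.inr (Set.mem_iUnion.2 ⟨m, Set.mem_iUnion.2 ⟨hm.trans hm₁, ?_⟩⟩)
    rcases hD with ⟨n, hn, hq⟩ | hq
    · exact Or.inl ⟨n, (hfg m).trans hn, hq⟩
    · exact Or.inr hq

lemma exists_E_subset {U : Set S}
    (hU : TopologicalSpace.GenerateOpen (gen {f : ℕ → ℕ | Computable f}) U) :
    infPt ∈ U → ∃ m₀ : ℕ, ∃ f : ℕ → ℕ, Computable f ∧ E m₀ f ⊆ U := by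
  induction hU with
  | basic s hs =>
    intro hmem
    rcases hs with ⟨n, m, rfl⟩ | ⟨n₀, m₀, rfl⟩ | ⟨m₀, f, hf, rfl⟩
    · exact absurd hmem (by simp [Sing, infPt])
    · rcases hmem with ⟨n, _, h⟩ | h <;> simp [infPt] at h
    · exact ⟨m₀, f, hf, subset_rfl⟩
  | univ => exact fun _ => ⟨0, fun _ => 0, Computable.const 0, Set.subset_univ _⟩
  | inter U V hU hV ihU ihV =>
    intro hmem
    obtain ⟨m₀, f, hf, hfs⟩ := ihU hmem.1
    obtain ⟨m₁, g, hg, hgs⟩ := ihV hmem.2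
    refine ⟨max m₀ m₁, fun m => max (f m) (g m),
      Primrec.nat_max.to_comp.comp hf hg, fun p hp => ?_⟩
    exact ⟨hfs (E_anti (le_max_left _ _) (fun m => le_max_left _ _) hp),
      hgs (E_anti (le_max_right _ _) (fun m => le_max_right _ _) hp)⟩
  | sUnion 𝒮 h ih =>
    intro hmem
    obtain ⟨U, hU𝒮, hU⟩ := hmem
    obtain ⟨m₀, f, hf, hsub⟩ := ih U hU𝒮 hU
    exact ⟨m₀, f, hf, hsub.trans (Set.subset_sUnion_of_mem hU𝒮)⟩

/-- With the topology generated by all singletons `{(n,m)}`, all `D(n₀,m₀)`, and all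
`E(m₀,f)` for computable `f : ℕ → ℕ`, the point `(∞,∞)` is in the closure of `ℕ²`,
but no computable sequence of points of `ℕ²` converges to `(∞,∞)`. -/
theorem infPt_mem_closure_and_no_computable_sequence_tendsto :
    infPt ∈ @closure S (topo {f : ℕ → ℕ | Computable f}) finitePts ∧
      ∀ s : ℕ → ℕ × ℕ, Computable s →
        ¬ Filter.Tendsto (fun n => emb (s n)) Filter.atTop
            (@nhds S (topo {f : ℕ → ℕ | Computable f}) infPt) := by
  letI : TopologicalSpace S := topo {f : ℕ → ℕ | Computable f}
  have isOpenE : ∀ (m₀ : ℕ) (f : ℕ → ℕ), Computable f → IsOpen (E m₀ f) := fun m₀ f hf =>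
    TopologicalSpace.GenerateOpen.basic _ (Or.inr (Or.inr ⟨m₀, f, hf, rfl⟩))
  constructor
  · rw [mem_closure_iff]
    intro o ho hmem
    obtain ⟨m₀, f, hf, hsub⟩ := exists_E_subset ho hmem
    exact ⟨emb (f m₀, m₀), hsub (emb_mem_E.2 ⟨le_rfl, le_rfl⟩), ⟨f m₀, m₀, rfl⟩⟩
  · intro s hs ht
    have hacomp : Computable (fun n => (s n).1) := Computable.fst.comp hs
    have hbcomp : Computable (fun n => (s n).2) := Computable.snd.comp hs
    set a : ℕ → ℕ := fun n => (s n).1 with ha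
    set b : ℕ → ℕ := fun n => (s n).2 with hb
    -- second coordinates tend to infinity
    have hbx : ∀ m : ℕ, ∃ n, m ≤ b n := by
      intro m
      have hev := ht ((isOpenE m (fun _ => 0) (Computable.const 0)).mem_nhds infPt_mem_E)
      have hev' : ∀ᶠ n in atTop, emb (s n) ∈ E m (fun _ => 0) := hev
      rcases hev'.exists with ⟨n, hn⟩
      exact ⟨n, (emb_mem_E.1 hn).1⟩
    set t : ℕ → ℕ := fun m => Nat.find (hbx m) with htdef
    have ht_spec : ∀ m, m ≤ b (t m) := fun m => Nat.find_spec (hbx m)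
    have ht_mono : Monotone t := fun m m' hmm' =>
      Nat.find_mono (fun n h => hmm'.trans h)
    have htcomp : Computable t := by
      have hrel : Computable₂ (fun m n : ℕ => decide (m ≤ b n)) :=
        Primrec.nat_le.decide.to_comp.comp Computable.fst (hbcomp.comp Computable.snd)
      have hpr := Partrec.rfind (p := fun m n => Part.some (decide (m ≤ b n)))
        hrel.partrec₂
      apply hpr.of_eq_tot
      intro m
      refine Nat.mem_rfind.2 ?_
      constructor
      · simp [Nat.find_spec (hbx m), ht_spec m]
      · intro k hk
        simp [Nat.find_min (hbx m) hk]
    -- running maximum of a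
    set F : ℕ → ℕ := fun k => Nat.rec 0 (fun n ih => max (a n) ih) k with hFdef
    have hF_le : ∀ n k, n < k → a n ≤ F k := by
      intro n k
      induction k with
      | zero => omega
      | succ k ih =>
        intro h
        rcases Nat.lt_succ_iff_lt_or_eq.1 h with h | h
        · exact (ih h).trans (le_max_right _ _)
        · subst h; exact le_max_left _ _
    have hFcomp : Computable F := by
      have hh : Computable₂ (fun (_ : ℕ) (p : ℕ × ℕ) => max (a p.1) p.2) :=
        Primrec.nat_max.to_comp.comp
          ((hacomp.comp Computable.fst).comp Computable.snd)
          (Computable.snd.comp Computable.snd)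
      exact Computable.nat_rec Computable.id (Computable.const 0) hh
    set f : ℕ → ℕ := fun m => F (t m + 1) + 1 with hfdef
    have hfcomp : Computable f :=
      Computable.succ.comp (hFcomp.comp (Computable.succ.comp htcomp))
    have hf_gt : ∀ n m, n ≤ t m → a n < f m := fun n m h =>
      Nat.lt_succ_of_le (hF_le n _ (Nat.lt_succ_of_le h))
    -- the neighborhood E 0 f
    have hev := ht ((isOpenE 0 f hfcomp).mem_nhds infPt_mem_E)
    have hev' : ∀ᶠ n in atTop, emb (s n) ∈ E 0 f := hev
    rw [Filter.eventually_atTop] at hev'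
    obtain ⟨N, hN⟩ := hev'
    set m : ℕ := (Finset.range (N + 1)).sup b + 1 with hmdef
    have hm : ∀ n ≤ N, b n < m := fun n hn =>
      Nat.lt_succ_of_le (Finset.le_sup (Finset.mem_range.2 (Nat.lt_succ_of_le hn)))
    have htmN : N ≤ t m := by
      by_contra hlt
      push_neg at hlt
      have h1 := ht_spec m
      have h2 := hm (t m) (le_of_lt hlt)
      omega
    have hmem := hN (t m) htmN
    have h3 : f (b (t m)) ≤ a (t m) := (emb_mem_E.1 hmem).2
    have h4 : t m ≤ t (b (t m)) := ht_mono (ht_spec m)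
    have h5 : a (t m) < f (b (t m)) := hf_gt (t m) (b (t m)) h4
    omega

end ArensLike
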